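/- For every ℓ ≥ 2, no witness to D_{3ℓ}(H_ℓ) has size less than |H_ℓ| = 6ℓ − 2. -/

import Mathlib

/-!
Formalization framework: finite posets are bundled as `FinPartOrd.{0}`, downsets are
`Finset`s of elements, unlabelled posets are isomorphism classes (`UPoset`), and a witness
of a set `Γ` of unlabelled posets at size `n` is a finite poset whose set of size-`n`
downsets, up to isomorphism, is exactly `Γ`.
-/

attribute [local instance] Classical.propDecidable

noncomputable section

open Finset

/-- `D` is a downset of the finite poset `Q`. -/
def IsDownset (Q : FinPartOrd.{0}) (D : Finset ↥Q) : Prop :=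
  ∀ ⦃a b : ↥Q⦄, a ∈ D → b ≤ a → b ∈ D

/-- The induced subposet of `Q` on a finset `D` of its elements. -/
def subposet (Q : FinPartOrd.{0}) (D : Finset ↥Q) : FinPartOrd.{0} :=
  FinPartOrd.of {x : ↥Q // x ∈ D}

/-- The isomorphism setoid on finite posets. -/
def isoSetoid : Setoid FinPartOrd.{0} where
  r P Q := Nonempty (↥P ≃o ↥Q)
  iseqv := ⟨fun _ => ⟨OrderIso.refl _⟩, fun ⟨e⟩ => ⟨e.symm⟩, fun ⟨e⟩ ⟨f⟩ => ⟨e.trans f⟩⟩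

/-- Unlabelled finite posets: isomorphism classes of finite posets. -/
def UPoset := Quotient isoSetoid

/-- The isomorphism class of a finite poset. -/
def cls (P : FinPartOrd.{0}) : UPoset := Quotient.mk isoSetoid P

/-- The number of elements of a finite poset. -/
def size (Q : FinPartOrd.{0}) : ℕ := Fintype.card ↥Q

/-- The size of an isomorphism class of finite posets. -/
def usize : UPoset → ℕ :=
  Quotient.lift size fun _ _ h => h.elim fun e => Fintype.card_congr e.toEquiv

/-- `D_n(Q)` : the set of downsets of `Q` of size `n`, up to isomorphism. -/
def DSet (n : ℕ) (Q : FinPartOrd.{0}) : Set UPoset :=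
  {c | ∃ D : Finset ↥Q, IsDownset Q D ∧ D.card = n ∧ cls (subposet Q D) = c}

/-- `d_n(Q)` : the number of isomorphism classes of downsets of `Q` of size `n`. -/
def dNum (n : ℕ) (Q : FinPartOrd.{0}) : ℕ := (DSet n Q).ncard

/-- `D(Q)` : the set of nonempty downsets of `Q`, up to isomorphism. -/
def DAllSet (Q : FinPartOrd.{0}) : Set UPoset :=
  {c | ∃ D : Finset ↥Q, IsDownset Q D ∧ D.Nonempty ∧ cls (subposet Q D) = c}

/-- `Q` is a witness of the set `Γ` of unlabelled posets (at size `n`): the set of size-`n`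
downsets of `Q`, up to isomorphism, is exactly `Γ`. -/
def IsWitness (n : ℕ) (Γ : Set UPoset) (Q : FinPartOrd.{0}) : Prop := DSet n Q = Γ

/-- `Q` is a minimal witness of `Γ` : `Q` is a witness and no proper downset of `Q` is
itself a witness of `Γ`. -/
def IsMinimalWitness (n : ℕ) (Γ : Set UPoset) (Q : FinPartOrd.{0}) : Prop :=
  IsWitness n Γ Q ∧
    ∀ D : Finset ↥Q, IsDownset Q D → D ≠ Finset.univ → ¬IsWitness n Γ (subposet Q D)

/-- The height of an element: the number of elements of a longest chain whose maximum is `x`. -/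
def heightEl (Q : FinPartOrd.{0}) (x : ↥Q) : ℕ :=
  sSup {k | ∃ c : Finset ↥Q, IsChain (· ≤ ·) (c : Set ↥Q) ∧ x ∈ c ∧ (∀ y ∈ c, y ≤ x) ∧ c.card = k}

/-- The height of a finite poset: the number of elements of a longest chain. -/
def posetHeight (Q : FinPartOrd.{0}) : ℕ :=
  sSup {k | ∃ c : Finset ↥Q, IsChain (· ≤ ·) (c : Set ↥Q) ∧ c.card = k}

/-- A finite poset is Newtonian if every element of level `i` covers every element of
level `i - 1`. -/
def Newtonian (Q : FinPartOrd.{0}) : Prop :=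
  ∀ x y : ↥Q, heightEl Q y = heightEl Q x + 1 → x ⋖ y

/-- A finite poset is connected if it is nonempty and any two elements are joined by a
comparability path. -/
def ConnectedPoset (Q : FinPartOrd.{0}) : Prop :=
  Nonempty ↥Q ∧ ∀ x y : ↥Q, Relation.ReflTransGen (fun a b : ↥Q => a ≤ b ∨ b ≤ a) x y

/-- `x` is a maximal element of the subset `W` of `Q`. -/
def IsMaxIn (Q : FinPartOrd.{0}) (W : Finset ↥Q) (x : ↥Q) : Prop :=
  x ∈ W ∧ ∀ y ∈ W, x ≤ y → y = x

/-- `x` is a maximal element of the finite poset `R`. -/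
def IsMaxEl (R : FinPartOrd.{0}) (x : ↥R) : Prop := ∀ y, x ≤ y → y = x

/-- A poset of type 𝒲 : the disjoint union of two connected Newtonian posets that are not
isomorphic, but which only differ in one maximal element (they become isomorphic after the
removal of a suitable maximal element from each). -/
def TypeW (P : FinPartOrd.{0}) : Prop :=
  ∃ W₁ W₂ : Finset ↥P,
    W₁ ∪ W₂ = Finset.univ ∧ Disjoint W₁ W₂ ∧
    (∀ x ∈ W₁, ∀ y ∈ W₂, ¬x ≤ y ∧ ¬y ≤ x) ∧
    ConnectedPoset (subposet P W₁) ∧ ConnectedPoset (subposet P W₂) ∧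
    Newtonian (subposet P W₁) ∧ Newtonian (subposet P W₂) ∧
    ¬Nonempty (↥(subposet P W₁) ≃o ↥(subposet P W₂)) ∧
    ∃ x y, IsMaxIn P W₁ x ∧ IsMaxIn P W₂ y ∧
      Nonempty (↥(subposet P (W₁.erase x)) ≃o ↥(subposet P (W₂.erase y)))

/-- An antichain on `i` elements. -/
def AntichainFin (i : ℕ) : Type := Fin i

instance (i : ℕ) : PartialOrder (AntichainFin i) where
  le x y := x = y
  le_refl _ := rfl
  le_trans a b c h₁ h₂ := show a = c from (show a = b from h₁).trans (show b = c from h₂)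
  le_antisymm _ _ h _ := h

instance (i : ℕ) : Fintype (AntichainFin i) := inferInstanceAs (Fintype (Fin i))
instance (i : ℕ) : Fintype (WithTop (AntichainFin i)) :=
  inferInstanceAs (Fintype (Option (Fin i)))

/-- `Λ_i`: the poset with `i` minimal elements and one maximal element above all of them. -/
def Lambda (i : ℕ) : FinPartOrd.{0} := FinPartOrd.of (WithTop (AntichainFin i))

/-- `k` disjoint copies of a poset `α`. -/
def Copies (k : ℕ) (α : Type) : Type := Fin k × α

instance (k : ℕ) (α : Type) [PartialOrder α] : PartialOrder (Copies k α) where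
  le x y := x.1 = y.1 ∧ x.2 ≤ y.2
  le_refl _ := ⟨rfl, le_refl _⟩
  le_trans _ _ _ h₁ h₂ := ⟨h₁.1.trans h₂.1, le_trans h₁.2 h₂.2⟩
  le_antisymm x y h₁ h₂ := by
    obtain ⟨x₁, x₂⟩ := x
    obtain ⟨y₁, y₂⟩ := y
    obtain ⟨h, h'⟩ := h₁
    cases h
    exact congrArg _ (le_antisymm h' h₂.2)

instance (k : ℕ) (α : Type) [Fintype α] : Fintype (Copies k α) :=
  inferInstanceAs (Fintype (Fin k × α))

/-- `H_ℓ`: the poset whose connected components are `ℓ` copies of `Λ₂` and one copy of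
`Λ_{3(ℓ-1)}`. -/
def Hposet (ℓ : ℕ) : FinPartOrd.{0} :=
  FinPartOrd.of (Copies ℓ (WithTop (AntichainFin 2)) ⊕ WithTop (AntichainFin (3 * (ℓ - 1))))

/-- The poset `P₀` placed above a chain of `i` elements. -/
def withChain (P₀ : FinPartOrd.{0}) (i : ℕ) : FinPartOrd.{0} :=
  FinPartOrd.of (Fin i ⊕ₗ ↥P₀)

/-- The disjoint union of two finite posets. -/
def disjSum (P R : FinPartOrd.{0}) : FinPartOrd.{0} := FinPartOrd.of (↥P ⊕ ↥R)

/-- The poset `P_iR_i`: the disjoint union of `P₀` and `R₀` each placed above a chain of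
`i` elements. -/
def PRposet (P₀ R₀ : FinPartOrd.{0}) (i : ℕ) : FinPartOrd.{0} :=
  disjSum (withChain P₀ i) (withChain R₀ i)

/-- `C(P₀R₀) = |D(P₀)| + |D(R₀)| − |D(P₀) ∩ D(R₀)|`. -/
def CNum (P₀ R₀ : FinPartOrd.{0}) : ℕ :=
  (DAllSet P₀).ncard + (DAllSet R₀).ncard - (DAllSet P₀ ∩ DAllSet R₀).ncard

/-- The vertices of the exchange graph: the downsets of `Q` of size `n`, as actual subsets. -/
def EGVert (n : ℕ) (Q : FinPartOrd.{0}) : Type :=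
  {D : Finset ↥Q // IsDownset Q D ∧ D.card = n}

/-- The exchange graph `G_n(Q)`: two size-`n` downsets are adjacent iff they differ by
exactly one element. -/
def ExchangeGraph (n : ℕ) (Q : FinPartOrd.{0}) : SimpleGraph (EGVert n Q) where
  Adj X Y := (X.1 \ Y.1).card = 1 ∧ (Y.1 \ X.1).card = 1
  symm := ⟨fun X Y h => ⟨h.2, h.1⟩⟩
  loopless := ⟨fun X h => by
    simp only [Finset.sdiff_self, Finset.card_empty] at h
    exact absurd h.1 (by simp)⟩

/-- The downset `D` of `Q`, viewed as a poset, is isomorphic (a "copy of") `P`. -/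
def IsoTo (Q : FinPartOrd.{0}) (D : Finset ↥Q) (P : FinPartOrd.{0}) : Prop :=
  Nonempty (↥(subposet Q D) ≃o ↥P)

/-- A path `A :: M ++ [C]` in the exchange graph `G_n(Q)` whose first vertex is a copy of
`Pa`, whose last vertex is a copy of `Pb`, and all of whose internal vertices are copies of
`Pmid`. -/
def SpecialPath (n : ℕ) (Q : FinPartOrd.{0}) (Pa Pmid Pb : FinPartOrd.{0})
    (A : EGVert n Q) (M : List (EGVert n Q)) (C : EGVert n Q) : Prop :=
  List.Chain' (ExchangeGraph n Q).Adj (A :: M ++ [C]) ∧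
    IsoTo Q A.1 Pa ∧ IsoTo Q C.1 Pb ∧ ∀ v ∈ M, IsoTo Q v.1 Pmid

/-- `T` is an antichain in `Q`. -/
def IsAntichainIn (Q : FinPartOrd.{0}) (T : Finset ↥Q) : Prop :=
  ∀ x ∈ T, ∀ y ∈ T, x ≤ y → x = y

/-- The possible shapes of `A \ X` and `C \ X`: an antichain possibly together with a single
element below all of it and/or a single element above all of it, or a two-element chain
together with one incomparable element. -/
def GoodForm (Q : FinPartOrd.{0}) (S : Finset ↥Q) : Prop :=
  (∃ T : Finset ↥Q, IsAntichainIn Q T ∧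
    (S = T ∨
      (∃ b, b ∉ T ∧ S = insert b T ∧ ∀ x ∈ T, b < x) ∨
      (∃ t, t ∉ T ∧ S = insert t T ∧ ∀ x ∈ T, x < t) ∨
      (∃ b t, b ∉ T ∧ t ∉ T ∧ b ≠ t ∧ S = insert b (insert t T) ∧
        (∀ x ∈ T, b < x) ∧ ∀ x ∈ T, x < t))) ∨
  (∃ x y z : ↥Q, S = {x, y, z} ∧ x ≠ y ∧ x ≠ z ∧ y ≠ z ∧ x < y ∧
    ¬x ≤ z ∧ ¬z ≤ x ∧ ¬y ≤ z ∧ ¬z ≤ y)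


/-!
Write `downDegree x` for the number of elements strictly below `x`; it is preserved by order
isomorphisms between downsets. In `H_ℓ` the down-degrees are `0`, `2` (the tops of the copies of
`Λ₂`) and `3(ℓ-1)` (the top of the big component). A witness `Q` therefore contains an element `x`
of down-degree `3(ℓ-1)` and a downset `D` of size `3ℓ`, a copy of `ℓ Λ₂`, in which every element
lies below an element of down-degree `2`. If some `d ∈ D` lay below `x`, say `d ≤ t ∈ D`, then
`↓x ∪ ↓t` would have at most `3ℓ` elements and would extend to a downset of size `3ℓ` containing
elements of down-degrees `3(ℓ-1)` and `2`; no downset of `H_ℓ` of size `3ℓ` does, since the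
principal downsets of such elements are disjoint and have `3ℓ + 1` elements together.
Hence `D` and `↓x` are disjoint and `|Q| ≥ 3ℓ + (3ℓ - 2)`.
-/

open Set

section DownDegree

variable {α β : Type*}

def downDegree [Preorder α] (x : α) : ℕ := (Set.Iio x).ncard

variable [PartialOrder α] [PartialOrder β]

theorem downDegree_map (f : α ↪o β) (hf : IsLowerSet (range f)) (x : α) :
    downDegree (f x) = downDegree x := by
  rw [downDegree, ← f.image_Iio hf, ncard_image_of_injective _ f.injective, downDegree]

theorem downDegree_subtype_val {s : Set α} (hs : IsLowerSet s) (x : s) :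
    downDegree (x : α) = downDegree x :=
  downDegree_map (OrderEmbedding.subtype _) (by simpa using hs) x

theorem ncard_Iic_eq_downDegree_add_one [Finite α] (x : α) :
    (Set.Iic x).ncard = downDegree x + 1 := by
  rw [← Set.Iio_insert, ncard_insert_of_notMem Set.self_notMem_Iio]
  rfl

theorem ncard_Iic_union_Iic_le [Finite α] {x t c : α} (hx : c ≤ x) (ht : c ≤ t) :
    (Set.Iic x ∪ Set.Iic t).ncard ≤ downDegree x + downDegree t + 1 := by
  have hinter : 1 ≤ (Set.Iic x ∩ Set.Iic t).ncard := (ncard_pos).2 ⟨c, hx, ht⟩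
  have := ncard_union_add_ncard_inter (Set.Iic x) (Set.Iic t)
  rw [ncard_Iic_eq_downDegree_add_one, ncard_Iic_eq_downDegree_add_one] at this
  omega

theorem downDegree_add_downDegree_add_two_le [Finite α] {s : Set α} (hs : IsLowerSet s)
    {u v : α} (hu : u ∈ s) (hv : v ∈ s) (h : Disjoint (Set.Iic u) (Set.Iic v)) :
    downDegree u + downDegree v + 2 ≤ s.ncard := by
  have hsub : Set.Iic u ∪ Set.Iic v ⊆ s :=
    union_subset (fun _ hw => hs hw hu) (fun _ hw => hs hw hv)
  have := ncard_le_ncard hsub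
  rw [ncard_union_eq h, ncard_Iic_eq_downDegree_add_one, ncard_Iic_eq_downDegree_add_one] at this
  omega

end DownDegree

section LowerSetExtension

variable {α : Type*} [PartialOrder α]

theorem IsLowerSet.insert_of_minimal {s : Set α} (hs : IsLowerSet s) {a : α}
    (ha : Minimal (· ∉ s) a) : IsLowerSet (insert a s) := by
  rintro b c hcb (rfl | hb)
  · by_cases hc : c ∈ s
    · exact Or.inr hc
    · exact Or.inl (le_antisymm hcb (ha.2 hc hcb))
  · exact Or.inr (hs hcb hb)

variable [Finite α]

theorem IsLowerSet.exists_superset_ncard_eq {s : Set α} (hs : IsLowerSet s) {n : ℕ}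
    (hsn : s.ncard ≤ n) (hn : n ≤ Nat.card α) :
    ∃ t, s ⊆ t ∧ IsLowerSet t ∧ t.ncard = n := by
  obtain ⟨k, rfl⟩ := Nat.exists_eq_add_of_le hsn
  induction k generalizing s with
  | zero => exact ⟨s, subset_rfl, hs, rfl⟩
  | succ k ih =>
    have hne : ∃ a, a ∉ s := by
      by_contra! h
      rw [eq_univ_of_forall h, ncard_univ] at hn
      omega
    obtain ⟨a, ha⟩ := exists_minimal_of_wellFoundedLT _ hne
    have hcard : (insert a s).ncard = s.ncard + 1 := ncard_insert_of_notMem ha.1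
    obtain ⟨t, hst, ht, htn⟩ :=
      ih (hs.insert_of_minimal ha) (by omega) (by omega)
    exact ⟨t, (subset_insert a s).trans hst, ht, by omega⟩

theorem disjoint_Iic_of_forall_ncard_ne {x t : α} {n : ℕ}
    (hn : downDegree x + downDegree t + 1 ≤ n) (hα : n ≤ Nat.card α)
    (h : ∀ s : Set α, IsLowerSet s → x ∈ s → t ∈ s → s.ncard ≠ n) :
    Disjoint (Set.Iic x) (Set.Iic t) := by
  rw [Set.disjoint_left]
  intro c hcx hct
  obtain ⟨s, hsub, hs, hcard⟩ :=
    ((isLowerSet_Iic x).union (isLowerSet_Iic t)).exists_superset_ncard_eq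
      ((ncard_Iic_union_Iic_le hcx hct).trans hn) hα
  exact h s hs (hsub (Or.inl le_rfl)) (hsub (Or.inr le_rfl)) hcard

end LowerSetExtension

theorem isDownset_iff_isLowerSet {Q : FinPartOrd.{0}} {D : Finset Q} :
    IsDownset Q D ↔ IsLowerSet (D : Set Q) :=
  ⟨fun h _ _ hba ha => h ha hba, fun h _ _ ha hba => h hba ha⟩

theorem exists_orderEmbedding_of_dSet_subset {n : ℕ} {P Q : FinPartOrd.{0}}
    (h : DSet n P ⊆ DSet n Q) {F : Set P} (hF : IsLowerSet F) (hcard : F.ncard = n) :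
    ∃ f : F ↪o Q, IsLowerSet (range f) ∧ (range f).ncard = n ∧
      ∀ y, downDegree (f y) = downDegree (y : P) := by
  obtain ⟨D, hD, hDcard, hcls⟩ : cls (subposet P F.toFinset) ∈ DSet n Q :=
    h ⟨F.toFinset, isDownset_iff_isLowerSet.2 (by simpa using hF),
      by rwa [← ncard_eq_toFinset_card'], rfl⟩
  obtain ⟨e⟩ : Nonempty (subposet Q D ≃o subposet P F.toFinset) := Quotient.exact hcls
  let g : F ≃o subposet Q D := (OrderIso.setCongr F F.toFinset (by simp)).trans e.symm
  let f : F ↪o Q := g.toOrderEmbedding.trans (OrderEmbedding.subtype _)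
  have hrange : range f = D := by
    ext x
    refine ⟨?_, fun hx => ⟨g.symm ⟨x, hx⟩, congrArg Subtype.val (g.apply_symm_apply _)⟩⟩
    rintro ⟨y, rfl⟩
    exact (g y).2
  have hDlower : IsLowerSet (range f) := hrange ▸ isDownset_iff_isLowerSet.1 hD
  refine ⟨f, hDlower, by rw [hrange, ncard_coe_finset, hDcard], fun y => ?_⟩
  rw [downDegree_map f hDlower, downDegree_subtype_val hF]

section Components

variable {α β : Type*} [PartialOrder α] [PartialOrder β]

theorem Sum.isLowerSet_range_inl : IsLowerSet (range (Sum.inl : α → α ⊕ β)) := by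
  rintro _ (a | b) h ⟨a', rfl⟩
  · exact ⟨a, rfl⟩
  · exact absurd h Sum.not_inr_le_inl

theorem Sum.downDegree_inl (a : α) : downDegree (Sum.inl a : α ⊕ β) = downDegree a :=
  downDegree_map (OrderEmbedding.ofMapLEIff Sum.inl fun _ _ => Sum.inl_le_inl_iff)
    (by exact Sum.isLowerSet_range_inl) a

theorem Sum.downDegree_inr (b : β) : downDegree (Sum.inr b : α ⊕ β) = downDegree b := by
  refine downDegree_map (OrderEmbedding.ofMapLEIff Sum.inr fun _ _ => Sum.inr_le_inr_iff) ?_ b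
  rintro _ (a | b) h ⟨b', rfl⟩
  · exact absurd h Sum.not_inl_le_inr
  · exact ⟨b, rfl⟩

theorem Copies.downDegree_mk {γ : Type} [PartialOrder γ] {n : ℕ} (k : Fin n) (a : γ) :
    downDegree (α := Copies n γ) (k, a) = downDegree a := by
  refine downDegree_map (OrderEmbedding.ofMapLEIff (β := Copies n γ) (fun a => (k, a))
    fun _ _ => ⟨And.right, fun h => ⟨rfl, h⟩⟩) ?_ a
  rintro _ ⟨k', a'⟩ ⟨hk, -⟩ ⟨b, rfl⟩
  obtain rfl : k' = k := hk
  exact ⟨a', rfl⟩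

theorem WithTop.downDegree_coe (a : α) : downDegree (a : WithTop α) = downDegree a := by
  refine downDegree_map WithTop.coeOrderHom ?_ a
  rintro _ (_ | b) h ⟨a', rfl⟩
  · exact absurd h (WithTop.not_top_le_coe a')
  · exact ⟨b, rfl⟩

theorem WithTop.downDegree_top [Finite α] : downDegree (⊤ : WithTop α) = Nat.card α := by
  rw [downDegree, ← WithTop.range_coe, ncard_range_of_injective WithTop.coe_injective]

end Components

theorem AntichainFin.downDegree_eq_zero {i : ℕ} (a : AntichainFin i) : downDegree a = 0 := by
  rw [downDegree, ncard_eq_zero]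
  exact eq_empty_of_forall_notMem fun b (hb : b < a) => hb.ne hb.le

theorem AntichainFin.card (i : ℕ) : Nat.card (AntichainFin i) = i :=
  Nat.card_eq_fintype_card.trans (Fintype.card_fin i)

theorem card_withTop_antichainFin (i : ℕ) : Nat.card (WithTop (AntichainFin i)) = i + 1 :=
  (Finite.card_option (α := AntichainFin i)).trans (by rw [AntichainFin.card])

theorem downDegree_withTop_antichainFin {i : ℕ} (w : WithTop (AntichainFin i)) :
    downDegree w = 0 ∨ downDegree w = i := by
  cases w with
  | top => exact Or.inr (by rw [WithTop.downDegree_top, AntichainFin.card])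
  | coe a => exact Or.inl (by rw [WithTop.downDegree_coe, AntichainFin.downDegree_eq_zero])

namespace Hposet

variable {l : ℕ}

theorem downDegree_inl (b : Copies l (WithTop (AntichainFin 2))) :
    downDegree (Sum.inl b : Hposet l) = downDegree (Prod.snd b) :=
  (Sum.downDegree_inl b).trans (Copies.downDegree_mk (Prod.fst b) (Prod.snd b))

theorem downDegree_inr (w : WithTop (AntichainFin (3 * (l - 1)))) :
    downDegree (Sum.inr w : Hposet l) = downDegree w :=
  Sum.downDegree_inr w

theorem card_copies : Nat.card (Copies l (WithTop (AntichainFin 2))) = 3 * l := by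
  change Nat.card (Fin l × WithTop (AntichainFin 2)) = _
  rw [Nat.card_prod, Nat.card_fin, card_withTop_antichainFin, mul_comm]

theorem card_eq : Nat.card (Hposet l) = 3 * l + (3 * (l - 1) + 1) := by
  change Nat.card (Copies l (WithTop (AntichainFin 2)) ⊕ WithTop (AntichainFin (3 * (l - 1)))) = _
  rw [Nat.card_sum, card_copies, card_withTop_antichainFin]

theorem size_eq (hl : 1 ≤ l) : size (Hposet l) = 6 * l - 2 := by
  rw [size, ← Nat.card_eq_fintype_card, card_eq]
  omega

theorem three_mul_lt_ncard (hl : 2 ≤ l) {F : Set (Hposet l)} (hF : IsLowerSet F) {u v : Hposet l}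
    (hu : u ∈ F) (hv : v ∈ F) (hu' : downDegree u = 3 * (l - 1)) (hv' : downDegree v = 2) :
    3 * l < F.ncard := by
  obtain ⟨a, rfl⟩ : ∃ a, u = Sum.inr a := by
    rcases u with b | a
    · have := (downDegree_inl b).symm.trans hu'
      rcases downDegree_withTop_antichainFin (Prod.snd b) with h | h <;> omega
    · exact ⟨a, rfl⟩
  obtain ⟨b, rfl⟩ : ∃ b, v = Sum.inl b := by
    rcases v with b | w
    · exact ⟨b, rfl⟩
    · have := (downDegree_inr w).symm.trans hv'
      rcases downDegree_withTop_antichainFin w with h | h <;> omega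
  have hdisj : Disjoint (Set.Iic (Sum.inr a : Hposet l)) (Set.Iic (Sum.inl b)) := by
    rw [Set.disjoint_left]
    rintro (c | c) hca hcb
    · exact Sum.not_inl_le_inr hca
    · exact Sum.not_inr_le_inl hcb
  have := downDegree_add_downDegree_add_two_le hF hu hv hdisj
  omega

variable {Q : FinPartOrd.{0}}

theorem exists_downDegree_eq_of_isWitness (hl : 1 ≤ l)
    (hQ : IsWitness (3 * l) (DSet (3 * l) (Hposet l)) Q) :
    ∃ x : Q, downDegree x = 3 * (l - 1) := by
  have htop : downDegree (α := Hposet l) (Sum.inr ⊤) = 3 * (l - 1) :=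
    (downDegree_inr ⊤).trans (by rw [WithTop.downDegree_top, AntichainFin.card])
  obtain ⟨F, hsub, hF, hFcard⟩ :=
    (isLowerSet_Iic (α := Hposet l) (Sum.inr ⊤)).exists_superset_ncard_eq (n := 3 * l)
      ((ncard_Iic_eq_downDegree_add_one _).trans_le (by omega)) (card_eq.symm ▸ by omega)
  obtain ⟨f, -, -, hf⟩ := exists_orderEmbedding_of_dSet_subset (Eq.superset hQ) hF hFcard
  exact ⟨f ⟨_, hsub Set.self_mem_Iic⟩, (hf _).trans htop⟩

theorem exists_ncard_eq_forall_le_downDegree_two_of_isWitness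
    (hQ : IsWitness (3 * l) (DSet (3 * l) (Hposet l)) Q) :
    ∃ D : Set Q, D.ncard = 3 * l ∧ ∀ d ∈ D, ∃ t ∈ D, d ≤ t ∧ downDegree t = 2 := by
  have hFcard : (range (α := Hposet l) Sum.inl).ncard = 3 * l :=
    (ncard_range_of_injective Sum.inl_injective).trans card_copies
  obtain ⟨f, -, hfcard, hf⟩ :=
    exists_orderEmbedding_of_dSet_subset (Eq.superset hQ) Sum.isLowerSet_range_inl hFcard
  refine ⟨range f, hfcard, ?_⟩
  rintro _ ⟨⟨_, b, rfl⟩, rfl⟩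
  refine ⟨f ⟨Sum.inl (Prod.fst b, ⊤), _, rfl⟩, ⟨_, rfl⟩,
    f.monotone (Sum.inl_le_inl_iff.2 ⟨rfl, le_top⟩), (hf _).trans ((downDegree_inl _).trans ?_)⟩
  exact WithTop.downDegree_top.trans (AntichainFin.card 2)

theorem ncard_ne_of_isWitness (hl : 2 ≤ l)
    (hQ : IsWitness (3 * l) (DSet (3 * l) (Hposet l)) Q) {S : Set Q} (hS : IsLowerSet S)
    {x t : Q} (hx : x ∈ S) (ht : t ∈ S) (hx' : downDegree x = 3 * (l - 1))
    (ht' : downDegree t = 2) : S.ncard ≠ 3 * l := by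
  intro hScard
  obtain ⟨f, hf, hfcard, hfdeg⟩ := exists_orderEmbedding_of_dSet_subset (Eq.subset hQ) hS hScard
  have := three_mul_lt_ncard hl hf ⟨⟨x, hx⟩, rfl⟩ ⟨⟨t, ht⟩, rfl⟩ ((hfdeg _).trans hx')
    ((hfdeg _).trans ht')
  omega

end Hposet

/-- For `ℓ ≥ 2`, no witness to `D_{3ℓ}(H_ℓ)` has size less than
`|H_ℓ| = 6ℓ − 2`. -/
theorem H_no_smaller_witness (l : ℕ) (hl : 2 ≤ l) :
    size (Hposet l) = 6 * l - 2 ∧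
      ∀ Q : FinPartOrd.{0}, IsWitness (3 * l) (DSet (3 * l) (Hposet l)) Q →
        6 * l - 2 ≤ size Q := by
  refine ⟨Hposet.size_eq (by omega), fun Q hQ => ?_⟩
  obtain ⟨x, hx⟩ := Hposet.exists_downDegree_eq_of_isWitness (by omega) hQ
  obtain ⟨D, hDcard, hDtop⟩ := Hposet.exists_ncard_eq_forall_le_downDegree_two_of_isWitness hQ
  have hQcard : 3 * l ≤ Nat.card Q := hDcard ▸ ncard_le_card D
  have hdisj : Disjoint D (Set.Iic x) := by
    refine Set.disjoint_right.2 fun d hdx hdD => ?_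
    obtain ⟨t, htD, hdt, ht⟩ := hDtop d hdD
    have hxt := disjoint_Iic_of_forall_ncard_ne (by omega) hQcard fun s hs hxs hts =>
      Hposet.ncard_ne_of_isWitness hl hQ hs hxs hts hx ht
    exact Set.disjoint_left.1 hxt hdx hdt
  have := ncard_le_card (D ∪ Set.Iic x)
  rw [ncard_union_eq hdisj, hDcard, ncard_Iic_eq_downDegree_add_one, hx] at this
  rw [size, ← Nat.card_eq_fintype_card]
  omega
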